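/- For every continuous function u : ℝ → ℝ whose support is contained in [0, β/2], one has the identity ∫₀^{β/2} ∫₀^{β/2} u(σ) F(σ + τ) u(τ) dτ dσ = (2ε(1 − exp(−βε)))⁻¹ · [ (∫₀^{β/2} exp(−σε) u(σ) dσ)² + (∫₀^{β/2} exp((σ − β/2)ε) u(σ) dσ)² ]; in particular this double integral is nonnegative (reflection positivity of the Green's function of −∂τ² + ε² on the circle of length β, with respect to the reflection τ ↦ −τ). -/

import Mathlib

open MeasureTheory intervalIntegral

/-!
For `σ, τ ∈ [0, β/2]` the point `σ + τ` lies in one period `[0, β]`, where `F` is a sum of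
two exponentials; these factorize as `e^{-σε} e^{-τε}` and `e^{(σ-β/2)ε} e^{(τ-β/2)ε}`. So on
the square `[0, β/2]²` the kernel `F(σ + τ)` has rank two, and the double integral is a
nonnegative multiple of a sum of two squares.
-/

theorem integral_integral_eq_mul_sq_add_sq {a b c : ℝ} {f g : ℝ → ℝ} (k : ℝ → ℝ → ℝ)
    (hf : IntervalIntegrable f volume a b) (hg : IntervalIntegrable g volume a b)
    (hk : ∀ σ ∈ Set.uIcc a b, ∀ τ ∈ Set.uIcc a b, k σ τ = c * (f σ * f τ + g σ * g τ)) :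
    ∫ σ in a..b, ∫ τ in a..b, k σ τ =
      c * ((∫ σ in a..b, f σ) ^ 2 + (∫ σ in a..b, g σ) ^ 2) := by
  have hinner : ∀ σ ∈ Set.uIcc a b, ∫ τ in a..b, k σ τ =
      c * (f σ * ∫ τ in a..b, f τ) + c * (g σ * ∫ τ in a..b, g τ) := by
    intro σ hσ
    rw [intervalIntegral.integral_congr fun τ hτ => hk σ hσ τ hτ,
      intervalIntegral.integral_const_mul,
      intervalIntegral.integral_add (hf.const_mul _) (hg.const_mul _),
      intervalIntegral.integral_const_mul, intervalIntegral.integral_const_mul, mul_add]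
  rw [intervalIntegral.integral_congr hinner,
    intervalIntegral.integral_add ((hf.mul_const _).const_mul _) ((hg.mul_const _).const_mul _),
    intervalIntegral.integral_const_mul, intervalIntegral.integral_const_mul,
    intervalIntegral.integral_mul_const, intervalIntegral.integral_mul_const]
  ring

noncomputable def thermalGreen (β ε τ : ℝ) : ℝ :=
  (Real.exp (-τ * ε) + Real.exp ((τ - β) * ε)) / (2 * ε * (1 - Real.exp (-β * ε)))

theorem thermalGreen_self (β ε : ℝ) : thermalGreen β ε β = thermalGreen β ε 0 := by
  simp only [thermalGreen, sub_self, zero_mul, neg_zero, zero_sub, add_comm]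

theorem thermalGreen_add (β ε σ τ : ℝ) :
    thermalGreen β ε (σ + τ) = (2 * ε * (1 - Real.exp (-β * ε)))⁻¹ *
      (Real.exp (-σ * ε) * Real.exp (-τ * ε) +
        Real.exp ((σ - β / 2) * ε) * Real.exp ((τ - β / 2) * ε)) := by
  rw [thermalGreen, div_eq_inv_mul, ← Real.exp_add, ← Real.exp_add]
  ring_nf

theorem Function.Periodic.eq_thermalGreen {β ε : ℝ} {F : ℝ → ℝ} (hβ : 0 < β)
    (hper : Function.Periodic F β) (hF : ∀ τ ∈ Set.Ico (0:ℝ) β, F τ = thermalGreen β ε τ) :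
    ∀ τ ∈ Set.Icc (0:ℝ) β, F τ = thermalGreen β ε τ := by
  rintro τ ⟨hτ0, hτβ⟩
  rcases hτβ.lt_or_eq with hlt | rfl
  · exact hF τ ⟨hτ0, hlt⟩
  · rw [thermalGreen_self, ← hF 0 ⟨le_rfl, hβ⟩, ← hper 0, zero_add]

/-- `1 - e^{-βε}` has the sign of `ε`. -/
theorem thermalGreen_normalization_nonneg {β : ℝ} (hβ : 0 ≤ β) (ε : ℝ) :
    0 ≤ 2 * ε * (1 - Real.exp (-β * ε)) := by
  rw [mul_assoc]
  refine mul_nonneg zero_le_two ?_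
  rcases le_total 0 ε with hε | hε
  · refine mul_nonneg hε (sub_nonneg.2 (Real.exp_le_one_iff.2 ?_))
    nlinarith
  · refine mul_nonneg_of_nonpos_of_nonpos hε (sub_nonpos.2 (Real.one_le_exp_iff.2 ?_))
    nlinarith

theorem stmt6_general (β ε : ℝ) (hβ : 0 < β) (F : ℝ → ℝ)
    (hper : Function.Periodic F β)
    (hF : ∀ τ ∈ Set.Ico (0:ℝ) β,
      F τ = (Real.exp (-τ * ε) + Real.exp ((τ - β) * ε)) / (2 * ε * (1 - Real.exp (-β * ε))))
    (u : ℝ → ℝ) (hu : Continuous u) :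
    (∫ σ in (0:ℝ)..β/2, ∫ τ in (0:ℝ)..β/2, u σ * F (σ + τ) * u τ) =
      (2 * ε * (1 - Real.exp (-β * ε)))⁻¹ *
        ((∫ σ in (0:ℝ)..β/2, Real.exp (-σ * ε) * u σ) ^ 2 +
         (∫ σ in (0:ℝ)..β/2, Real.exp ((σ - β / 2) * ε) * u σ) ^ 2) ∧
    0 ≤ ∫ σ in (0:ℝ)..β/2, ∫ τ in (0:ℝ)..β/2, u σ * F (σ + τ) * u τ := by
  have hFστ : ∀ σ ∈ Set.uIcc 0 (β / 2), ∀ τ ∈ Set.uIcc 0 (β / 2),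
      F (σ + τ) = thermalGreen β ε (σ + τ) := by
    rw [Set.uIcc_of_le (by positivity)]
    rintro σ ⟨hσ0, hσ⟩ τ ⟨hτ0, hτ⟩
    exact hper.eq_thermalGreen hβ hF _ ⟨by linarith, by linarith⟩
  have hidentity := integral_integral_eq_mul_sq_add_sq
    (c := (2 * ε * (1 - Real.exp (-β * ε)))⁻¹) (fun σ τ => u σ * F (σ + τ) * u τ)
    ((by fun_prop : Continuous fun σ => Real.exp (-σ * ε) * u σ).intervalIntegrable 0 (β / 2))
    ((by fun_prop : Continuous fun σ => Real.exp ((σ - β / 2) * ε) * u σ).intervalIntegrable _ _)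
    fun σ hσ τ hτ => by rw [hFστ σ hσ τ hτ, thermalGreen_add]; ring
  refine ⟨hidentity, hidentity ▸ ?_⟩
  have := thermalGreen_normalization_nonneg hβ.le ε
  positivity

/-- reflection positivity of the Green's function of `−∂τ² + ε²` on the circle of
length `β`: for continuous `u` supported in `[0, β/2]`,
`∫₀^{β/2} ∫₀^{β/2} u(σ) F(σ+τ) u(τ) dτ dσ
  = (2ε(1 − e^{−βε}))⁻¹ ((∫₀^{β/2} e^{−σε} u σ dσ)² + (∫₀^{β/2} e^{(σ−β/2)ε} u σ dσ)²) ≥ 0`. -/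
theorem stmt6 (β ε : ℝ) (hβ : 0 < β) (hε : 0 < ε) (F : ℝ → ℝ)
    (hper : Function.Periodic F β)
    (hF : ∀ τ ∈ Set.Ico (0:ℝ) β,
      F τ = (Real.exp (-τ * ε) + Real.exp ((τ - β) * ε)) / (2 * ε * (1 - Real.exp (-β * ε))))
    (u : ℝ → ℝ) (hu : Continuous u) (hsupp : Function.support u ⊆ Set.Icc 0 (β / 2)) :
    (∫ σ in (0:ℝ)..β/2, ∫ τ in (0:ℝ)..β/2, u σ * F (σ + τ) * u τ) =
      (2 * ε * (1 - Real.exp (-β * ε)))⁻¹ *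
        ((∫ σ in (0:ℝ)..β/2, Real.exp (-σ * ε) * u σ) ^ 2 +
         (∫ σ in (0:ℝ)..β/2, Real.exp ((σ - β / 2) * ε) * u σ) ^ 2) ∧
    0 ≤ ∫ σ in (0:ℝ)..β/2, ∫ τ in (0:ℝ)..β/2, u σ * F (σ + τ) * u τ :=
  stmt6_general β ε hβ F hper hF u hu
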